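/- For integers n, d, x, s for which G₃(n,d,x,s) is defined, W(G₃(n,d,x,s)) = W(B₁(n−1,d,x)) + n²/4 − dn + 2d² + 5d + 11/4 − 2x + 2s². In particular, W(G₃(n,d,x,1)) = W(G₃(n,d,x,0)) + 2. -/

import Mathlib

/-- The Wiener index: sum of distances over unordered pairs of vertices. -/
noncomputable def wiener {V : Type*} [Fintype V] (G : SimpleGraph V) : ℕ :=
  (∑ u : V, ∑ v : V, G.dist u v) / 2

/-- Vertex set for a caterpillar with spine `u_{-d}, …, u_d` and `L i` leaves at `u_i`.
`(0, i)` is the spine vertex `u_i`; `(j, i)` for `1 ≤ j ≤ L i` is the `j`-th leaf at `u_i`. -/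
noncomputable def catVerts (d : ℤ) (L : ℤ → ℕ) : Finset (ℤ × ℤ) :=
  (Finset.Icc (-d) d).biUnion (fun i => (Finset.Icc (0:ℤ) (L i : ℤ)).image (fun j => (j, i)))

/-- The caterpillar graph with spine `u_{-d}, …, u_d` and `L i` leaves appended to `u_i`. -/
def caterpillar (d : ℤ) (L : ℤ → ℕ) : SimpleGraph ↥(catVerts d L) :=
  SimpleGraph.fromRel (fun a b =>
    (a.1.1 = 0 ∧ b.1.1 = 0 ∧ a.1.2 + 1 = b.1.2) ∨
    (a.1.2 = b.1.2 ∧ a.1.1 = 0 ∧ b.1.1 ≠ 0))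

/-- Leaf-count function of the caterpillar `B₁(n,d,x)`. -/
def B1L (n d x : ℤ) : ℤ → ℕ := fun i =>
  (if i = -d - 1 + x ∨ i = d + 1 - x then 1 else 0) +
  (if |i| ≤ (n - 2*d - 4)/2 then 1 else 0)

/-- The caterpillar `B₁(n,d,x)`. -/
noncomputable def B1 (n d x : ℤ) := caterpillar d (B1L n d x)

/-- Leaf-count function of the caterpillar `B₂(n,d,x)`. -/
def B2L (n d x : ℤ) : ℤ → ℕ := fun i =>
  (if |i| ≤ d - 2 then 1 else 0) +
  (if |i| = d - 1 then x.toNat else 0) +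
  (if |i| = d then ((n - 4*d - 2*x + 2)/2).toNat else 0)

/-- The caterpillar `B₂(n,d,x)`. -/
noncomputable def B2 (n d x : ℤ) := caterpillar d (B2L n d x)

/-- `G₁(n,d,x,s)`: `B₁(n−2,d,x)` with an extra leaf at `u_s` and at `u_d`. -/
noncomputable def G1 (n d x s : ℤ) :=
  caterpillar d (fun i => B1L (n-2) d x i + (if i = s then 1 else 0) + (if i = d then 1 else 0))

/-- `G₂(n,d,x,s)`: `B₂(n−2,d,x)` with an extra leaf at `u_s` and at `u_d`. -/
noncomputable def G2 (n d x s : ℤ) :=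
  caterpillar d (fun i => B2L (n-2) d x i + (if i = s then 1 else 0) + (if i = d then 1 else 0))

/-- `G₃(n,d,x,s)`: `B₁(n−1,d,x)` with an extra leaf at `u_s`. -/
noncomputable def G3 (n d x s : ℤ) :=
  caterpillar d (fun i => B1L (n-1) d x i + (if i = s then 1 else 0))

/-- `G₄(n,d,x,s)`: `B₂(n−1,d,x)` with an extra leaf at `u_s`. -/
noncomputable def G4 (n d x s : ℤ) :=
  caterpillar d (fun i => B2L (n-1) d x i + (if i = s then 1 else 0))

/-- The star on `n` vertices: vertex `0` adjacent to all others. -/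
def starGraph (n : ℕ) : SimpleGraph (Fin n) :=
  SimpleGraph.fromRel (fun a _ => a.val = 0)


/-! In a caterpillar the distance is read off the coordinates: `|i - i'|` along the spine, plus one
for each endpoint that is a leaf. Appending a leaf `w` at `u_s` therefore raises the Wiener index by
the sum of the distances from `w`, namely `∑ᵢ (|i - s| + 1 + ℓᵢ (|i - s| + 2))`, where `ℓᵢ` is the
number of leaves at `u_i`. For `B₁(n - 1, d, x)` with `n = 2k + 2d + 5` the leaves sit at
`u_{-d-1+x}`, `u_{d+1-x}` and `u_{-k}, …, u_k`, and the sum is evaluated with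
`∑_{|i| ≤ m} |i - s| = m (m + 1) + s²`. -/

open Finset

theorem two_mul_sum_Icc_abs_sub {a b s : ℤ} (ha : a ≤ s) (hb : s ≤ b) :
    2 * ∑ i ∈ Icc a b, |i - s| = (s - a) * (s - a + 1) + (b - s) * (b - s + 1) := by
  induction b, hb using Int.leInduction with
  | base =>
    induction a, ha using Int.leInductionDown with
    | base => simp
    | pred a ha ih =>
      rw [← insert_Icc_left_eq_Icc_sub_one (by lia), sum_insert (by simp), mul_add, ih,
        abs_of_nonpos (by lia)]
      ring
  | succ b hb ih =>
    rw [← insert_Icc_right_eq_Icc_add_one (by lia), sum_insert (by simp), mul_add, ih,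
      abs_of_nonneg (by lia)]
    ring

theorem sum_Icc_neg_abs_sub {m s : ℤ} (hs : |s| ≤ m) :
    ∑ i ∈ Icc (-m) m, |i - s| = m * (m + 1) + s ^ 2 := by
  rw [abs_le] at hs
  have := two_mul_sum_Icc_abs_sub hs.1 hs.2
  nlinarith

theorem Finset.sum_sum_insert_of_symm {α M : Type*} [DecidableEq α] [AddCommMonoid M]
    {s : Finset α} {a : α} (ha : a ∉ s) (f : α → α → M) (hsymm : ∀ x, f a x = f x a)
    (hdiag : f a a = 0) :
    ∑ x ∈ insert a s, ∑ y ∈ insert a s, f x y = ∑ x ∈ s, ∑ y ∈ s, f x y + 2 • ∑ x ∈ s, f x a := by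
  simp only [sum_insert ha, hdiag, zero_add, sum_add_distrib, hsymm, two_nsmul]
  abel

theorem SimpleGraph.dist_eq_of_potential {V : Type*} {G : SimpleGraph V} {b : V} (f : V → ℕ)
    (hb : f b = 0) (hadj : ∀ u v, G.Adj u v → f u ≤ f v + 1)
    (hdesc : ∀ a, a ≠ b → ∃ c, G.Adj a c ∧ f c + 1 = f a) (a : V) :
    G.dist a b = f a := by
  obtain ⟨p, hp⟩ : ∃ p : G.Walk a b, p.length = f a := by
    induction hfa : f a using Nat.strong_induction_on generalizing a with
    | _ m ih =>
      by_cases hab : a = b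
      · subst hab
        exact ⟨.nil, by simp [hb, ← hfa]⟩
      · obtain ⟨c, hac, hc⟩ := hdesc a hab
        obtain ⟨q, hq⟩ := ih (f c) (by lia) c rfl
        exact ⟨.cons hac q, by simp [hq, hc, hfa]⟩
  have le_length {a : V} (q : G.Walk a b) : f a ≤ q.length := by
    clear hdesc
    induction q with
    | nil => simp [hb]
    | cons h _ ih => grind [SimpleGraph.Walk.length_cons]
  obtain ⟨q, hq⟩ := SimpleGraph.Reachable.exists_walk_length_eq_dist ⟨p⟩
  have := SimpleGraph.dist_le p
  have := le_length q
  lia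

namespace Caterpillar

variable {d : ℤ} {L : ℤ → ℕ}

theorem mem_catVerts {p : ℤ × ℤ} :
    p ∈ catVerts d L ↔ -d ≤ p.2 ∧ p.2 ≤ d ∧ 0 ≤ p.1 ∧ p.1 ≤ L p.2 := by
  obtain ⟨j, i⟩ := p
  simp only [catVerts, mem_biUnion, mem_image, mem_Icc, Prod.mk.injEq]
  constructor
  · rintro ⟨i, hi, j, hj, rfl, rfl⟩
    exact ⟨hi.1, hi.2, hj⟩
  · rintro ⟨h1, h2, hj⟩
    exact ⟨i, ⟨h1, h2⟩, j, hj, rfl, rfl⟩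

theorem spine_mem_catVerts {i : ℤ} (h1 : -d ≤ i) (h2 : i ≤ d) : ((0 : ℤ), i) ∈ catVerts d L :=
  mem_catVerts.2 ⟨h1, h2, le_rfl, Nat.cast_nonneg _⟩

theorem caterpillar_adj_iff {a b : catVerts d L} :
    (caterpillar d L).Adj a b ↔
      a.1.1 = 0 ∧ b.1.1 = 0 ∧ (a.1.2 + 1 = b.1.2 ∨ b.1.2 + 1 = a.1.2) ∨
      a.1.2 = b.1.2 ∧ (a.1.1 = 0 ↔ b.1.1 ≠ 0) := by
  rw [caterpillar, SimpleGraph.fromRel_adj]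
  constructor
  · rintro ⟨-, h⟩
    grind
  · intro h
    refine ⟨fun hab => ?_, by grind⟩
    subst hab
    grind

def catDist (p q : ℤ × ℤ) : ℕ :=
  if p = q then 0 else (p.2 - q.2).natAbs + (if p.1 = 0 then 0 else 1) + (if q.1 = 0 then 0 else 1)

theorem catDist_comm (p q : ℤ × ℤ) : catDist p q = catDist q p := by
  unfold catDist
  split_ifs <;> grind

theorem catDist_le_of_adj {u v : catVerts d L} (h : (caterpillar d L).Adj u v) (q : ℤ × ℤ) :
    catDist u q ≤ catDist v q + 1 := by
  rw [caterpillar_adj_iff] at h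
  obtain ⟨⟨j, i⟩, _⟩ := u
  obtain ⟨⟨j', i'⟩, _⟩ := v
  simp only [catDist, Prod.ext_iff] at h ⊢
  split_ifs <;> omega

theorem exists_adj_catDist_add_one {a : catVerts d L} {q : ℤ × ℤ} (hq : q ∈ catVerts d L)
    (haq : a.1 ≠ q) : ∃ c, (caterpillar d L).Adj a c ∧ catDist c q + 1 = catDist a q := by
  obtain ⟨⟨j, i⟩, ha⟩ := a
  obtain ⟨j', i'⟩ := q
  have hi := mem_catVerts.1 ha
  have hi' := mem_catVerts.1 hq
  simp only [ne_eq, Prod.mk.injEq] at haq hi hi'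
  by_cases hleaf : j = 0 ∧ i = i'
  · refine ⟨⟨(j', i'), hq⟩, caterpillar_adj_iff.2 (by simp only; omega), ?_⟩
    simp only [catDist]
    split_ifs <;> simp_all
  -- a leaf steps to its spine vertex, a spine vertex to its spine neighbour towards `q`
  obtain ⟨c, hc⟩ : ∃ c : ℤ, -d ≤ c ∧ c ≤ d ∧
      (j = 0 → (i' < i → c + 1 = i) ∧ (i < i' → c = i + 1)) ∧ (j ≠ 0 → c = i) := by
    rcases lt_trichotomy i i' with h | h | h
    · exact ⟨if j = 0 then i + 1 else i, by split_ifs <;> omega⟩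
    · exact ⟨i, by omega⟩
    · exact ⟨if j = 0 then i - 1 else i, by split_ifs <;> omega⟩
  refine ⟨⟨(0, c), spine_mem_catVerts hc.1 hc.2.1⟩, caterpillar_adj_iff.2 ?_, ?_⟩
  · simp only [true_and, ne_eq, not_true_eq_false, iff_false]
    omega
  · simp only [catDist, Prod.mk.injEq]
    split_ifs <;> omega

theorem dist_caterpillar (a b : catVerts d L) : (caterpillar d L).dist a b = catDist a b :=
  SimpleGraph.dist_eq_of_potential (fun a : catVerts d L => catDist a b) (by simp [catDist])
    (fun _ _ h => catDist_le_of_adj h b)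
    (fun _ hab => exists_adj_catDist_add_one b.2 (Subtype.coe_ne_coe.2 hab)) a

theorem sum_catVerts {M : Type*} [AddCommMonoid M] (f : ℤ × ℤ → M) :
    ∑ p ∈ catVerts d L, f p = ∑ i ∈ Icc (-d) d, ∑ j ∈ Icc 0 (L i : ℤ), f (j, i) := by
  rw [catVerts, sum_biUnion]
  · refine sum_congr rfl fun i _ => sum_image fun _ _ _ _ h => (Prod.ext_iff.1 h).1
  · intro i _ i' _ hii'
    simp only [Function.onFun, disjoint_left, mem_image]
    rintro _ ⟨j, -, rfl⟩ ⟨j', -, h⟩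
    exact hii' (Prod.ext_iff.1 h).2.symm

theorem sum_sum_dist_caterpillar :
    ∑ u, ∑ v, (caterpillar d L).dist u v = ∑ p ∈ catVerts d L, ∑ q ∈ catVerts d L, catDist p q := by
  simp only [dist_caterpillar]
  rw [← sum_coe_sort (catVerts d L)]
  simp only [sum_coe_sort (catVerts d L)]

theorem catVerts_add_leaf {s : ℤ} (hs₁ : -d ≤ s) (hs₂ : s ≤ d) :
    catVerts d (fun i => L i + if i = s then 1 else 0) =
      insert ((L s : ℤ) + 1, s) (catVerts d L) := by
  ext ⟨j, i⟩
  simp only [mem_insert, mem_catVerts, Prod.mk.injEq]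
  split_ifs with h
  · subst h; omega
  · omega

theorem sum_catDist_leaf {q : ℤ × ℤ} (hq : q ∉ catVerts d L) (hleaf : q.1 ≠ 0) :
    ∑ p ∈ catVerts d L, catDist p q =
      ∑ i ∈ Icc (-d) d, ((i - q.2).natAbs + 1 + L i * ((i - q.2).natAbs + 2)) := by
  rw [sum_catVerts]
  refine sum_congr rfl fun i hi => ?_
  have hne : ∀ j ∈ Icc 0 (L i : ℤ), (j, i) ≠ q := by
    rintro j hj rfl
    rw [mem_Icc] at hi hj
    exact hq (mem_catVerts.2 ⟨hi.1, hi.2, hj⟩)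
  rw [← insert_Icc_add_one_left_eq_Icc (Nat.cast_nonneg _), sum_insert (by simp),
    sum_congr rfl fun j hj => show catDist (j, i) q = (i - q.2).natAbs + 2 by
      simp only [mem_Icc] at hj
      simp only [catDist, if_neg (hne j (mem_Icc.2 (by omega))), if_neg hleaf]
      split_ifs <;> omega]
  simp [catDist, hne 0 (by simp), hleaf]

theorem wiener_caterpillar_add_leaf {s : ℤ} (hs₁ : -d ≤ s) (hs₂ : s ≤ d) :
    wiener (caterpillar d (fun i => L i + if i = s then 1 else 0)) = wiener (caterpillar d L) +
      ∑ i ∈ Icc (-d) d, ((i - s).natAbs + 1 + L i * ((i - s).natAbs + 2)) := by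
  have hnew : ((L s : ℤ) + 1, s) ∉ catVerts d L := by simp [mem_catVerts]
  simp only [wiener, sum_sum_dist_caterpillar]
  rw [catVerts_add_leaf hs₁ hs₂, sum_sum_insert_of_symm hnew _ (catDist_comm _) (by simp [catDist]),
    sum_catDist_leaf hnew (by positivity), smul_eq_mul, Nat.add_mul_div_left _ _ two_pos]

end Caterpillar

theorem sum_B1L_leaf_distances {m d x s k : ℤ} (hk : (m - 2 * d - 4) / 2 = k) (hs : |s| ≤ k)
    (hkd : k ≤ d) (hx₁ : 1 ≤ x) (hx₂ : x ≤ d) (hs₁ : -d - 1 + x ≤ s) (hs₂ : s ≤ d + 1 - x) :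
    ((∑ i ∈ Icc (-d) d, ((i - s).natAbs + 1 + B1L m d x i * ((i - s).natAbs + 2)) : ℕ) : ℤ) =
      d ^ 2 + 5 * d + k ^ 2 + 5 * k + 9 - 2 * x + 2 * s ^ 2 := by
  have hk₀ : 0 ≤ k := (abs_nonneg s).trans hs
  have hsplit : ∀ i, (((i - s).natAbs + 1 + B1L m d x i * ((i - s).natAbs + 2) : ℕ) : ℤ) =
      (|i - s| + 1) + (if i = -d - 1 + x ∨ i = d + 1 - x then |i - s| + 2 else 0) +
        (if |i| ≤ k then |i - s| + 2 else 0) := by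
    intro i
    simp only [B1L, hk]
    push_cast
    split_ifs <;> ring
  have hpair : (Icc (-d) d).filter (fun i => i = -d - 1 + x ∨ i = d + 1 - x) =
      {-d - 1 + x, d + 1 - x} := by
    ext i; simp only [mem_filter, mem_Icc, mem_insert, mem_singleton]; omega
  have hcore : (Icc (-d) d).filter (fun i => |i| ≤ k) = Icc (-k) k := by
    ext i; simp only [mem_filter, mem_Icc, abs_le]; omega
  push_cast [hsplit]
  rw [sum_add_distrib, sum_add_distrib, ← sum_filter, ← sum_filter, hpair, hcore,
    sum_pair (by omega), sum_add_distrib, sum_add_distrib,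
    sum_Icc_neg_abs_sub (abs_le.2 ⟨by omega, by omega⟩), sum_Icc_neg_abs_sub hs, sum_const,
    sum_const, Int.card_Icc, Int.card_Icc, nsmul_eq_mul, nsmul_eq_mul,
    Int.toNat_of_nonneg (by omega), Int.toNat_of_nonneg (by omega),
    abs_of_nonpos (by omega : -d - 1 + x - s ≤ 0), abs_of_nonneg (by omega : 0 ≤ d + 1 - x - s)]
  ring

theorem wiener_G3_eq {n k d x s : ℤ} (hn : n = 2 * k + 2 * d + 5) (hs : |s| ≤ k) (hx₁ : 1 ≤ x)
    (hx₂ : x ≤ d - k) :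
    (wiener (G3 n d x s) : ℤ) =
      wiener (B1 (n - 1) d x) + (d ^ 2 + 5 * d + k ^ 2 + 5 * k + 9 - 2 * x + 2 * s ^ 2) := by
  have := abs_le.1 hs
  rw [G3, Caterpillar.wiener_caterpillar_add_leaf (by omega) (by omega), Nat.cast_add,
    sum_B1L_leaf_distances (by omega) hs (by omega) hx₁ (by omega) (by omega) (by omega)]
  rfl

theorem wiener_G3_general (n d x s : ℤ) (hno : Odd n)
    (hd2 : 2 * d ≤ n - 9)
    (hx1 : 1 ≤ x) (hx2 : 2 * x ≤ 4 + 4 * d - (n - 1))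
    (hs : s ∈ ({0, 1} : Set ℤ)) :
    (wiener (G3 n d x s) : ℚ)
      = (wiener (B1 (n - 1) d x) : ℚ) + (n : ℚ)^2 / 4 - (d:ℚ) * (n : ℚ)
        + 2 * (d:ℚ)^2 + 5 * (d:ℚ) + 11 / 4 - 2 * (x:ℚ) + 2 * (s:ℚ)^2 ∧
    wiener (G3 n d x 1) = wiener (G3 n d x 0) + 2 := by
  obtain ⟨k, hk⟩ : ∃ k, n = 2 * k + 2 * d + 5 := by
    obtain ⟨t, rfl⟩ := hno
    exact ⟨t - d - 2, by ring⟩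
  have hW (s : ℤ) (hs : s = 0 ∨ s = 1) :=
    wiener_G3_eq (s := s) hk (abs_le.2 ⟨by omega, by omega⟩) hx1 (by omega)
  constructor
  · have hWs := hW s hs
    have hnq : (n : ℚ) = 2 * k + 2 * d + 5 := by exact_mod_cast hk
    qify at hWs
    rw [hWs, hnq]
    ring
  · have h1 := hW 1 (by simp)
    have h0 := hW 0 (by simp)
    omega

/-- `W(G₃(n,d,x,s)) = W(B₁(n−1,d,x)) + n²/4 − dn + 2d² + 5d + 11/4 − 2x + 2s²`;
in particular `W(G₃(n,d,x,1)) = W(G₃(n,d,x,0)) + 2`. -/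
theorem wiener_G3 (n d x s : ℤ) (hno : Odd n) (hn : 19 ≤ n)
    (hd1 : n - 3 ≤ 4 * d) (hd2 : 2 * d ≤ n - 9)
    (hx1 : 1 ≤ x) (hx2 : 2 * x ≤ 4 + 4 * d - (n - 1))
    (hs : s ∈ ({0, 1} : Set ℤ)) :
    (wiener (G3 n d x s) : ℚ)
      = (wiener (B1 (n - 1) d x) : ℚ) + (n : ℚ)^2 / 4 - (d:ℚ) * (n : ℚ)
        + 2 * (d:ℚ)^2 + 5 * (d:ℚ) + 11 / 4 - 2 * (x:ℚ) + 2 * (s:ℚ)^2 ∧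
    wiener (G3 n d x 1) = wiener (G3 n d x 0) + 2 :=
  wiener_G3_general n d x s hno hd2 hx1 hx2 hs
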